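/- arXiv:1001.0095 — 2 statements merged into one kernel-verified Lean document; each statement's English description precedes it below -/
import Mathlib

section
/- For every nonnegative integer n, (-1)^n = e^{-2n} ∑_{j≥0} (-2)^j τ_j(n)/j!, where τ_j(n) := n![z^n](z-n)^j e^z. -/
/-- The Poisson–Charlier coefficient τ_j(n) = ∑_{0≤ℓ≤j} C(j,ℓ)(-1)^{j-ℓ} n!/(n-ℓ)! · n^{j-ℓ}. -/
noncomputable def tau (j n : ℕ) : ℝ :=
  ∑ ℓ ∈ Finset.range (j + 1),
    (j.choose ℓ : ℝ) * (-1) ^ (j - ℓ) * (n.descFactorial ℓ : ℝ) * (n : ℝ) ^ (j - ℓ)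

/-!
The generating function of the Poisson–Charlier coefficients is
`∑_j x^j τ_j(n) / j! = (1 + x)^n e^{-n x}`: the `j`-th term is exactly the `j`-th coefficient of
the Cauchy product of the binomial series of `(1 + x)^n` with the exponential series of
`e^{-n x}`. At `x = -2` the right-hand side is `(-1)^n e^{2n}`.
-/

open Finset Nat

lemma hasSum_choose_mul_pow {R : Type*} [CommSemiring R] [TopologicalSpace R] (n : ℕ) (x : R) :
    HasSum (fun k => (n.choose k : R) * x ^ k) ((1 + x) ^ n) := by
  have h : HasSum (fun k => (n.choose k : R) * x ^ k)
      (∑ k ∈ range (n + 1), (n.choose k : R) * x ^ k) :=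
    hasSum_sum_of_ne_finset_zero fun k hk => by simp [Nat.choose_eq_zero_of_lt (by simpa using hk)]
  convert h using 1
  rw [add_comm, add_pow]
  exact sum_congr rfl fun k _ => by rw [one_pow, mul_one, mul_comm]

lemma pow_mul_tau_div_factorial_eq_sum (x : ℝ) (j n : ℕ) :
    x ^ j * tau j n / j ! =
      ∑ k ∈ range (j + 1), (n.choose k * x ^ k) * ((-(n * x)) ^ (j - k) / (j - k)!) := by
  rw [tau, mul_sum, sum_div]
  refine sum_congr rfl fun k hk => ?_
  have hkj : k ≤ j := Nat.lt_succ_iff.mp (mem_range.mp hk)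
  have hj : (j ! : ℝ) = j.choose k * k ! * (j - k)! := by
    exact_mod_cast (Nat.choose_mul_factorial_mul_factorial hkj).symm
  have hx : x ^ j = x ^ k * x ^ (j - k) := by rw [← pow_add, Nat.add_sub_cancel' hkj]
  have hnx : (-(n * x)) ^ (j - k) = (-1) ^ (j - k) * (n : ℝ) ^ (j - k) * x ^ (j - k) := by
    rw [neg_eq_neg_one_mul, mul_pow, mul_pow, mul_assoc]
  have : (j.choose k : ℝ) ≠ 0 := by exact_mod_cast (Nat.choose_pos hkj).ne'
  rw [hj, hx, hnx, Nat.descFactorial_eq_factorial_mul_choose]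
  push_cast
  field_simp

theorem hasSum_pow_mul_tau_div_factorial (n : ℕ) (x : ℝ) :
    HasSum (fun j => x ^ j * tau j n / j !) ((1 + x) ^ n * Real.exp (-(n * x))) := by
  have hbin := hasSum_choose_mul_pow n x
  have hexp : HasSum (fun m : ℕ => (-(n * x)) ^ m / m !) (Real.exp (-(n * x))) := by
    rw [Real.exp_eq_exp_ℝ]
    exact NormedSpace.expSeries_div_hasSum_exp _
  have hcauchy := hasSum_sum_range_mul_of_summable_norm (R := ℝ)
    (summable_norm_iff.mpr hbin.summable) (summable_norm_iff.mpr hexp.summable)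
  rw [hbin.tsum_eq, hexp.tsum_eq] at hcauchy
  simpa only [pow_mul_tau_div_factorial_eq_sum] using hcauchy

/-- For every n, (-1)^n = e^{-2n} ∑_{j≥0} (-2)^j τ_j(n)/j!. -/
theorem neg_one_pow_eq_poisson_charlier (n : ℕ) :
    HasSum (fun j : ℕ => Real.exp (-(2 * n)) * ((-2 : ℝ) ^ j * tau j n / (j.factorial : ℝ)))
      ((-1 : ℝ) ^ n) := by
  have hval : Real.exp (-(2 * n)) * ((1 + -2 : ℝ) ^ n * Real.exp (-(n * -2))) = (-1) ^ n := by
    rw [mul_left_comm, ← Real.exp_add, show -(2 * n : ℝ) + -(n * -2) = 0 by ring]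
    norm_num
  exact hval ▸ (hasSum_pow_mul_tau_div_factorial n (-2)).mul_left (Real.exp (-(2 * n)))
end

section
/- For every nonnegative integer n, 2^n = e^n ∑_{j≥0} τ_j(n)/j!, where τ_j(n) := n![z^n](z-n)^j e^z. -/
open Finset Nat

lemma choose_mul_descFactorial_div_factorial {K : Type*} [Field K] [CharZero K] {j ℓ : ℕ}
    (h : ℓ ≤ j) (n : ℕ) :
    (j.choose ℓ * n.descFactorial ℓ : K) / j ! = n.choose ℓ / (j - ℓ)! := by
  have hchoose : (j.choose ℓ : K) ≠ 0 := cast_ne_zero.mpr (choose_pos h).ne'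
  have hfactorial : (ℓ ! : K) ≠ 0 := cast_ne_zero.mpr ℓ.factorial_ne_zero
  rw [← choose_mul_factorial_mul_factorial h, descFactorial_eq_factorial_mul_choose]
  push_cast
  field_simp

lemma tau_div_factorial (j n : ℕ) :
    tau j n / j ! = ∑ ℓ ∈ range (j + 1), (n.choose ℓ : ℝ) * ((-n : ℝ) ^ (j - ℓ) / (j - ℓ)!) := by
  rw [tau, sum_div]
  refine sum_congr rfl fun ℓ hℓ => ?_
  have h : (j.choose ℓ * n.descFactorial ℓ : ℝ) / j ! = n.choose ℓ / (j - ℓ)! :=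
    choose_mul_descFactorial_div_factorial (Nat.lt_succ_iff.mp (mem_range.mp hℓ)) n
  calc _ = (j.choose ℓ * n.descFactorial ℓ : ℝ) / j ! * ((-1) ^ (j - ℓ) * n ^ (j - ℓ)) := by ring
    _ = _ := by rw [h, neg_pow]; ring

lemma hasSum_choose (n : ℕ) : HasSum (fun ℓ => (n.choose ℓ : ℝ)) (2 ^ n) := by
  have h : HasSum (fun ℓ => (n.choose ℓ : ℝ)) (∑ ℓ ∈ range (n + 1), (n.choose ℓ : ℕ) : ℕ) := by
    push_cast
    exact hasSum_sum_of_ne_finset_zero fun ℓ hℓ => by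
      simp [choose_eq_zero_of_lt (by simpa using hℓ : n < ℓ)]
  exact_mod_cast sum_range_choose n ▸ h

/-- For every n, 2^n = e^n ∑_{j≥0} τ_j(n)/j!. -/
theorem two_pow_eq_poisson_charlier (n : ℕ) :
    HasSum (fun j : ℕ => Real.exp n * (tau j n / (j.factorial : ℝ))) ((2 : ℝ) ^ n) := by
  have hexp : HasSum (fun i => (-n : ℝ) ^ i / i !) (Real.exp (-n)) := by
    rw [Real.exp_eq_exp_ℝ]
    exact NormedSpace.expSeries_div_hasSum_exp _
  have hcauchy := hasSum_sum_range_mul_of_summable_norm (R := ℝ)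
    (hasSum_choose n).summable.norm hexp.summable.norm
  rw [(hasSum_choose n).tsum_eq, hexp.tsum_eq] at hcauchy
  have hvalue : Real.exp n * (2 ^ n * Real.exp (-n)) = 2 ^ n := by
    rw [mul_left_comm, ← Real.exp_add, add_neg_cancel, Real.exp_zero, mul_one]
  simpa only [tau_div_factorial, hvalue] using hcauchy.mul_left (Real.exp n)
end
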